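/- arXiv:2411.08317 — 5 statements merged into one kernel-verified Lean document; each statement's English description precedes it below -/
import Mathlib

section
/- Let r ≥ 1 be an integer and M > 0. There exists a constant C = C(M, r) such that the following holds: if n ≥ 1 and φ₁, …, φₙ : [0,1] → [0,1] are C^r diffeomorphisms of [0,1] onto itself satisfying Σ_{i=1}^n ‖φᵢ − Id‖_{C^r} ≤ M, then ‖φₙ ∘ φ_{n−1} ∘ ⋯ ∘ φ₁‖_{C^r} ≤ C. -/
/-!
Write `ψᵢ = φᵢ - id`, `εᵢ = ‖ψᵢ‖_{C^r}` and `Gᵢ = φᵢ₋₁ ∘ ⋯ ∘ φ₀`, and bound the derivatives of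
the `Gᵢ` order by order. Suppose all derivatives of order `≤ j` are bounded by `K`. Since
`Gᵢ₊₁ = Gᵢ + ψᵢ ∘ Gᵢ` and `(ψᵢ ∘ Gᵢ)' = (ψᵢ' ∘ Gᵢ) · Gᵢ'`, the Leibniz rule and Faà di Bruno's
formula show that `Aᵢ = |Gᵢ^{(j+1)}|` enters linearly: `Aᵢ₊₁ ≤ (1 + εᵢ) Aᵢ + c εᵢ` with `c`
depending only on `j` and `K`. Hence `Aₙ + c ≤ ∏ (1 + εᵢ) (1 + c) ≤ exp M (1 + c)`, a discrete
Gronwall estimate independent of `n`.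
-/

open Set

/-- The `C^m` norm of a real function `g` on a set `S ⊆ ℝ`: the supremum of
`|g^{(j)}(p)|` over `0 ≤ j ≤ m` and `p ∈ S`. -/
noncomputable def cNorm1 (m : ℕ) (g : ℝ → ℝ) (S : Set ℝ) : ℝ :=
  sSup {x | ∃ j : ℕ, j ≤ m ∧ ∃ p ∈ S, x = |iteratedDerivWithin j g S p|}

/-- `compSeq φ n = φ (n-1) ∘ ⋯ ∘ φ 1 ∘ φ 0` (and `compSeq φ 0 = id`). -/
def compSeq (φ : ℕ → ℝ → ℝ) : ℕ → ℝ → ℝ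
  | 0 => id
  | n + 1 => φ n ∘ compSeq φ n

section

variable {s : Set ℝ}

theorem cNorm1_nonneg (m : ℕ) (g : ℝ → ℝ) : 0 ≤ cNorm1 m g s :=
  Real.sSup_nonneg <| by
    rintro x ⟨j, -, p, -, rfl⟩
    exact abs_nonneg _

theorem cNorm1_le {m : ℕ} {g : ℝ → ℝ} {C : ℝ} (hC : 0 ≤ C)
    (h : ∀ j ≤ m, ∀ p ∈ s, |iteratedDerivWithin j g s p| ≤ C) : cNorm1 m g s ≤ C :=
  Real.sSup_le (by rintro x ⟨j, hj, p, hp, rfl⟩; exact h j hj p hp) hC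

theorem abs_iteratedDerivWithin_le_cNorm1 (hs : IsCompact s) (hs' : UniqueDiffOn ℝ s)
    {m : ℕ} {g : ℝ → ℝ} (hg : ContDiffOn ℝ m g s) {j : ℕ} (hj : j ≤ m) {p : ℝ} (hp : p ∈ s) :
    |iteratedDerivWithin j g s p| ≤ cNorm1 m g s := by
  have hset : {x | ∃ j : ℕ, j ≤ m ∧ ∃ p ∈ s, x = |iteratedDerivWithin j g s p|} =
      ⋃ j ∈ Iic m, (fun p => |iteratedDerivWithin j g s p|) '' s := by
    ext x
    simp [eq_comm]
  refine le_csSup ?_ ⟨j, hj, p, hp, rfl⟩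
  rw [hset]
  refine (finite_Iic m).bddAbove_biUnion.2 fun k hk => ?_
  exact (hs.image_of_continuousOn
    (hg.continuousOn_iteratedDerivWithin (by exact_mod_cast hk) hs').abs).bddAbove

theorem mapsTo_compSeq {φ : ℕ → ℝ → ℝ} {n : ℕ} (h : ∀ i < n, MapsTo (φ i) s s) :
    MapsTo (compSeq φ n) s s := by
  induction n with
  | zero => exact mapsTo_id s
  | succ n ih => exact (h n n.lt_succ_self).comp (ih fun i hi => h i (Nat.lt_succ_of_lt hi))

theorem contDiffOn_compSeq {N : WithTop ℕ∞} {φ : ℕ → ℝ → ℝ} {n : ℕ}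
    (hφ : ∀ i < n, ContDiffOn ℝ N (φ i) s) (h : ∀ i < n, MapsTo (φ i) s s) :
    ContDiffOn ℝ N (compSeq φ n) s := by
  induction n with
  | zero => exact contDiffOn_id
  | succ n ih =>
    exact (hφ n n.lt_succ_self).comp (ih (fun i hi => hφ i (Nat.lt_succ_of_lt hi))
      fun i hi => h i (Nat.lt_succ_of_lt hi))
      (mapsTo_compSeq fun i hi => h i (Nat.lt_succ_of_lt hi))

theorem abs_iteratedDerivWithin_comp_le (hs : UniqueDiffOn ℝ s) {n : ℕ} {f g : ℝ → ℝ}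
    (hf : ContDiffOn ℝ n f s) (hg : ContDiffOn ℝ n g s) (hgs : MapsTo g s s) {p : ℝ} (hp : p ∈ s)
    {C D : ℝ} (hC : ∀ k ≤ n, |iteratedDerivWithin k f s (g p)| ≤ C)
    (hD : ∀ k, 1 ≤ k → k ≤ n → |iteratedDerivWithin k g s p| ≤ D ^ k) :
    |iteratedDerivWithin n (f ∘ g) s p| ≤ n.factorial * C * D ^ n := by
  simp only [← Real.norm_eq_abs, ← norm_iteratedFDerivWithin_eq_norm_iteratedDerivWithin] at *
  exact norm_iteratedFDerivWithin_comp_le hf hg le_rfl hs hs hgs hp hC hD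

theorem sum_range_choose_succ_le (j : ℕ) :
    ∑ i ∈ Finset.range j, (j.choose (i + 1) : ℝ) ≤ 2 ^ j := by
  have h := Finset.sum_range_succ' (fun k => j.choose k) j
  rw [Nat.sum_range_choose] at h
  exact_mod_cast (Nat.le.intro h.symm)

theorem abs_iteratedDerivWithin_succ_comp_le (hs : UniqueDiffOn ℝ s) {j : ℕ} {ψ g : ℝ → ℝ}
    (hψ : ContDiffOn ℝ (j + 1) ψ s) (hg : ContDiffOn ℝ (j + 1) g s) (hgs : MapsTo g s s)
    {ε K : ℝ} (hK : 1 ≤ K) (hψε : ∀ k ≤ j + 1, ∀ q ∈ s, |iteratedDerivWithin k ψ s q| ≤ ε)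
    (hgK : ∀ k ≤ j, ∀ q ∈ s, |iteratedDerivWithin k g s q| ≤ K) {p : ℝ} (hp : p ∈ s) :
    |iteratedDerivWithin (j + 1) (ψ ∘ g) s p| ≤
      ε * |iteratedDerivWithin (j + 1) g s p| + 2 ^ j * j.factorial * K ^ (j + 1) * ε := by
  have hε : 0 ≤ ε := (abs_nonneg _).trans (hψε 0 (Nat.zero_le _) p hp)
  have hψ' : ContDiffOn ℝ j (derivWithin ψ s) s := hψ.derivWithin hs le_rfl
  have hg' : ContDiffOn ℝ j (derivWithin g s) s := hg.derivWithin hs le_rfl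
  have hgj : ContDiffOn ℝ j g s := hg.of_le (by norm_cast; omega)
  have hchain : EqOn (derivWithin (ψ ∘ g) s) ((derivWithin ψ s ∘ g) • derivWithin g s) s :=
    fun x hx => derivWithin_comp x ((hψ.differentiableOn (by simp)) (g x) (hgs hx))
      ((hg.differentiableOn (by simp)) x hx) hgs
  have hfirst : ∀ i ≤ j, |iteratedDerivWithin i (derivWithin ψ s ∘ g) s p| ≤
      i.factorial * ε * K ^ i := by
    intro i hi
    refine abs_iteratedDerivWithin_comp_le hs (hψ'.of_le (by exact_mod_cast hi))
      (hgj.of_le (by exact_mod_cast hi)) hgs hp (fun k hk => ?_) (fun k hk1 hk => ?_)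
    · rw [← iteratedDerivWithin_succ']
      exact hψε (k + 1) (by omega) (g p) (hgs hp)
    · exact (hgK k (by omega) p hp).trans (le_self_pow₀ hK (by omega))
  have hsecond (i : ℕ) : iteratedDerivWithin i (derivWithin g s) s p =
      iteratedDerivWithin (i + 1) g s p := by
    rw [iteratedDerivWithin_succ']
  have hhead : ∀ i ∈ Finset.range j,
      |(j.choose (i + 1) : ℝ) * (iteratedDerivWithin (i + 1) (derivWithin ψ s ∘ g) s p *
        iteratedDerivWithin (j - (i + 1)) (derivWithin g s) s p)| ≤
      j.choose (i + 1) * (j.factorial * ε * K ^ j * K) := by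
    intro i hi
    have hij : i + 1 ≤ j := Finset.mem_range.1 hi
    rw [abs_mul, abs_mul, Nat.abs_cast, hsecond]
    gcongr
    · exact (hfirst _ hij).trans (by gcongr)
    · exact hgK _ (by omega) p hp
  rw [iteratedDerivWithin_succ', iteratedDerivWithin_congr hchain hp,
    iteratedDerivWithin_smul hp hs (hψ'.comp hgj hgs p hp) (hg' p hp), Finset.sum_range_succ']
  simp only [nsmul_eq_mul, smul_eq_mul, Nat.choose_zero_right, Nat.cast_one, one_mul,
    Nat.sub_zero, iteratedDerivWithin_zero]
  calc _ ≤ _ := abs_add_le _ _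
    _ ≤ ∑ i ∈ Finset.range j, j.choose (i + 1) * (j.factorial * ε * K ^ j * K) +
        ε * |iteratedDerivWithin (j + 1) g s p| := by
      gcongr
      · exact (Finset.abs_sum_le_sum_abs _ _).trans (Finset.sum_le_sum hhead)
      · rw [abs_mul, ← iteratedDerivWithin_succ']
        gcongr
        simpa only [iteratedDerivWithin_one, Function.comp_apply] using
          hψε 1 (by omega) (g p) (hgs hp)
    _ ≤ 2 ^ j * (j.factorial * ε * K ^ j * K) + ε * |iteratedDerivWithin (j + 1) g s p| := by
      rw [← Finset.sum_mul]
      gcongr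
      exact sum_range_choose_succ_le j
    _ = _ := by ring

theorem abs_iteratedDerivWithin_succ_comp_le_of_sub_id (hs : UniqueDiffOn ℝ s) {j : ℕ}
    {f g : ℝ → ℝ} (hf : ContDiffOn ℝ (j + 1) f s) (hg : ContDiffOn ℝ (j + 1) g s)
    (hgs : MapsTo g s s) {ε K : ℝ} (hK : 1 ≤ K)
    (hfε : ∀ k ≤ j + 1, ∀ q ∈ s, |iteratedDerivWithin k (fun x => f x - x) s q| ≤ ε)
    (hgK : ∀ k ≤ j, ∀ q ∈ s, |iteratedDerivWithin k g s q| ≤ K) {p : ℝ} (hp : p ∈ s) :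
    |iteratedDerivWithin (j + 1) (f ∘ g) s p| ≤
      (1 + ε) * |iteratedDerivWithin (j + 1) g s p| + 2 ^ j * j.factorial * K ^ (j + 1) * ε := by
  have hψ : ContDiffOn ℝ (j + 1) (fun x => f x - x) s := hf.sub contDiffOn_id
  have hsplit : f ∘ g = g + (fun x => f x - x) ∘ g := by
    ext x
    simp
  rw [hsplit, iteratedDerivWithin_add hp hs (hg p hp) (hψ.comp hg hgs p hp)]
  calc _ ≤ _ := abs_add_le _ _
    _ ≤ _ := add_le_add_right (abs_iteratedDerivWithin_succ_comp_le hs hψ hg hgs hK hfε hgK hp) _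
    _ = _ := by ring

theorem abs_iteratedDerivWithin_succ_compSeq_add_le (hs : UniqueDiffOn ℝ s) {j n : ℕ}
    {φ : ℕ → ℝ → ℝ} {ε : ℕ → ℝ} {K : ℝ} (hK : 1 ≤ K)
    (hφ : ∀ i < n, ContDiffOn ℝ (j + 1) (φ i) s) (hφs : ∀ i < n, MapsTo (φ i) s s)
    (hε : ∀ i < n, ∀ k ≤ j + 1, ∀ q ∈ s, |iteratedDerivWithin k (fun x => φ i x - x) s q| ≤ ε i)
    (hG : ∀ i ≤ n, ∀ k ≤ j, ∀ q ∈ s, |iteratedDerivWithin k (compSeq φ i) s q| ≤ K)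
    {p : ℝ} (hp : p ∈ s) :
    |iteratedDerivWithin (j + 1) (compSeq φ n) s p| + 2 ^ j * j.factorial * K ^ (j + 1) ≤
      Real.exp (∑ i ∈ Finset.range n, ε i) * (1 + 2 ^ j * j.factorial * K ^ (j + 1)) := by
  set c := 2 ^ j * j.factorial * K ^ (j + 1)
  induction n with
  | zero =>
    simp only [compSeq, iteratedDerivWithin_id hp hs, Finset.range_zero, Finset.sum_empty,
      Real.exp_zero, one_mul, if_neg j.succ_ne_zero]
    split_ifs <;> simp
  | succ n ih =>
    have hεn : 0 ≤ ε n := (abs_nonneg _).trans (hε n n.lt_succ_self 0 (Nat.zero_le _) p hp)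
    have hstep := abs_iteratedDerivWithin_succ_comp_le_of_sub_id hs (hφ n n.lt_succ_self)
      (contDiffOn_compSeq (fun i hi => hφ i (Nat.lt_succ_of_lt hi))
        fun i hi => hφs i (Nat.lt_succ_of_lt hi))
      (mapsTo_compSeq fun i hi => hφs i (Nat.lt_succ_of_lt hi)) hK
      (hε n n.lt_succ_self) (hG n n.le_succ) hp
    have ih' := ih (fun i hi => hφ i (Nat.lt_succ_of_lt hi))
      (fun i hi => hφs i (Nat.lt_succ_of_lt hi)) (fun i hi => hε i (Nat.lt_succ_of_lt hi))
      fun i hi => hG i (hi.trans n.le_succ)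
    rw [Finset.sum_range_succ, Real.exp_add]
    calc |iteratedDerivWithin (j + 1) (compSeq φ (n + 1)) s p| + c
        ≤ (1 + ε n) * (|iteratedDerivWithin (j + 1) (compSeq φ n) s p| + c) := by
          simp only [compSeq]; linarith
      _ ≤ Real.exp (ε n) * (Real.exp (∑ i ∈ Finset.range n, ε i) * (1 + c)) := by
          gcongr
          linarith [Real.add_one_le_exp (ε n)]
      _ = _ := by ring

theorem exists_bound_iteratedDerivWithin_compSeq (hs : IsCompact s) (hs' : UniqueDiffOn ℝ s)
    (r : ℕ) (M : ℝ) {j : ℕ} (hj : j ≤ r) :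
    ∃ K, 1 ≤ K ∧ ∀ (n : ℕ) (φ : ℕ → ℝ → ℝ), (∀ i < n, ContDiffOn ℝ r (φ i) s) →
      (∀ i < n, MapsTo (φ i) s s) →
      ∑ i ∈ Finset.range n, cNorm1 r (fun x => φ i x - x) s ≤ M →
      ∀ k ≤ j, ∀ p ∈ s, |iteratedDerivWithin k (compSeq φ n) s p| ≤ K := by
  induction j with
  | zero =>
    obtain ⟨R, hR⟩ := hs.exists_bound_of_continuousOn continuousOn_id
    refine ⟨max 1 R, le_max_left _ _, fun n φ _ hφs _ k hk p hp => ?_⟩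
    rw [Nat.le_zero.1 hk, iteratedDerivWithin_zero]
    exact (hR _ (mapsTo_compSeq hφs hp)).trans (le_max_right _ _)
  | succ j ih =>
    obtain ⟨K, hK, hbound⟩ := ih (by omega)
    set c := 2 ^ j * j.factorial * K ^ (j + 1)
    refine ⟨max K (Real.exp M * (1 + c)), hK.trans (le_max_left _ _), ?_⟩
    intro n φ hφ hφs hsum k hk p hp
    have hprefix : ∀ i ≤ n, ∀ k ≤ j, ∀ q ∈ s, |iteratedDerivWithin k (compSeq φ i) s q| ≤ K := by
      intro i hi
      refine hbound i φ (fun l hl => hφ l (hl.trans_le hi)) (fun l hl => hφs l (hl.trans_le hi)) ?_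
      refine (Finset.sum_le_sum_of_subset_of_nonneg (Finset.range_mono hi) ?_).trans hsum
      exact fun l _ _ => cNorm1_nonneg _ _
    obtain hk | rfl := hk.lt_or_eq
    · exact (hprefix n le_rfl k (by omega) p hp).trans (le_max_left _ _)
    have hgronwall := abs_iteratedDerivWithin_succ_compSeq_add_le hs' hK
      (fun i hi => (hφ i hi).of_le (by exact_mod_cast hj)) hφs
      (ε := fun i => cNorm1 r (fun x => φ i x - x) s)
      (fun i hi k hk q hq => abs_iteratedDerivWithin_le_cNorm1 hs hs'
        ((hφ i hi).sub contDiffOn_id) (by omega) hq) hprefix hp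
    calc _ ≤ |iteratedDerivWithin (j + 1) (compSeq φ n) s p| + c :=
          le_add_of_nonneg_right (by positivity)
      _ ≤ Real.exp M * (1 + c) := hgronwall.trans (by gcongr)
      _ ≤ _ := le_max_right _ _

end

theorem stmt4_general (r : ℕ) (M : ℝ) :
    ∃ C : ℝ, 0 < C ∧
      ∀ (n : ℕ) (φ : ℕ → ℝ → ℝ), 1 ≤ n →
        (∀ i < n, ContDiffOn ℝ (r : ℕ) (φ i) (Icc (0 : ℝ) 1)) →
        (∀ i < n, BijOn (φ i) (Icc (0 : ℝ) 1) (Icc (0 : ℝ) 1)) →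
        (∀ i < n, ∀ x ∈ Icc (0 : ℝ) 1, derivWithin (φ i) (Icc (0 : ℝ) 1) x ≠ 0) →
        (∑ i ∈ Finset.range n, cNorm1 r (fun x => φ i x - x) (Icc (0 : ℝ) 1)) ≤ M →
        cNorm1 r (compSeq φ n) (Icc (0 : ℝ) 1) ≤ C := by
  obtain ⟨K, hK, hbound⟩ := exists_bound_iteratedDerivWithin_compSeq isCompact_Icc
    (uniqueDiffOn_Icc zero_lt_one) r M le_rfl
  refine ⟨K, zero_lt_one.trans_le hK, fun n φ _ hφ hbij _ hsum => ?_⟩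
  exact cNorm1_le (zero_le_one.trans hK) (hbound n φ hφ (fun i hi => (hbij i hi).mapsTo) hsum)

/-- Lemma C.4 (Avila–de Melo–Martens): a composition of `C^r` diffeomorphisms of `[0,1]`
whose total `C^r`-distance to the identity is at most `M` has `C^r` norm bounded by a
constant `C = C(M, r)` independent of the number of factors. -/
theorem stmt4 (r : ℕ) (hr : 1 ≤ r) (M : ℝ) (hM : 0 < M) :
    ∃ C : ℝ, 0 < C ∧
      ∀ (n : ℕ) (φ : ℕ → ℝ → ℝ), 1 ≤ n →
        (∀ i < n, ContDiffOn ℝ (r : ℕ) (φ i) (Icc (0 : ℝ) 1)) →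
        (∀ i < n, BijOn (φ i) (Icc (0 : ℝ) 1) (Icc (0 : ℝ) 1)) →
        (∀ i < n, ∀ x ∈ Icc (0 : ℝ) 1, derivWithin (φ i) (Icc (0 : ℝ) 1) x ≠ 0) →
        (∑ i ∈ Finset.range n, cNorm1 r (fun x => φ i x - x) (Icc (0 : ℝ) 1)) ≤ M →
        cNorm1 r (compSeq φ n) (Icc (0 : ℝ) 1) ≤ C :=
  stmt4_general r M
end

section
/- Let K ≥ 1, let I ⊆ ℝ be a compact interval with 0 ∈ I, and let f : I → ℝ be a map with f(I) ⊆ I that has K-bounded nonlinearity. Then the length of I satisfies |I| ≤ 2K², and consequently |f'(x)| ≤ 8K⁴ for all x ∈ I. -/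
open Set

/-- `f : [a,b] → ℝ` (with `0 ∈ [a,b]`) has `K`-bounded nonlinearity if there is a `C¹`
map `ψ` with `ψ(0) = 0`, `K⁻¹ ≤ ψ' ≤ K` on `[a,b]`, and `f(x) = f(0) + 2ψ(x)²`. -/
def KBoundedNonlinearity (K : ℝ) (f : ℝ → ℝ) (a b : ℝ) : Prop :=
  ∃ ψ ψ' : ℝ → ℝ, ψ 0 = 0 ∧
    (∀ x ∈ Icc a b,
      HasDerivWithinAt ψ (ψ' x) (Icc a b) x ∧ K⁻¹ ≤ ψ' x ∧ ψ' x ≤ K) ∧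
    (∀ x ∈ Icc a b, f x = f 0 + 2 * ψ x ^ 2)

/-!
Since `K⁻¹ ≤ ψ' ≤ K` and `ψ 0 = 0`, we have `K⁻¹ |x| ≤ |ψ x| ≤ K |x|` on `I = [a, b]`.
As `f` maps `I` into itself, `2 ψ(x)² = f x - f 0 ≤ |I|`, hence `x² ≤ K² |I| / 2` for every
`x ∈ I`; applied at both endpoints, `|I|² ≤ 2 (a² + b²) ≤ 2 K² |I|`.
Finally `f' = 4 ψ ψ'` is bounded by `4 · K |I| · K`, which is at most `8 K⁴`.
-/

theorem Convex.mul_sub_le_image_sub_of_le_hasDerivWithinAt {s : Set ℝ} (hs : Convex ℝ s)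
    {ψ ψ' : ℝ → ℝ} {m : ℝ} (hψ : ∀ x ∈ s, HasDerivWithinAt ψ (ψ' x) s x)
    (hm : ∀ x ∈ s, m ≤ ψ' x) {x y : ℝ} (hx : x ∈ s) (hy : y ∈ s) (hxy : x ≤ y) :
    m * (y - x) ≤ ψ y - ψ x := by
  have hmono : MonotoneOn (fun t => ψ t - m * t) s := by
    refine monotoneOn_of_hasDerivWithinAt_nonneg hs (f' := fun t => ψ' t - m)
      (fun t ht => ((hψ t ht).sub ((hasDerivWithinAt_id t s).const_mul m)).continuousWithinAt)
      (fun t ht => ?_) (fun t ht => sub_nonneg.2 (hm t (interior_subset ht)))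
    exact (((hψ t (interior_subset ht)).sub
      ((hasDerivWithinAt_id t s).const_mul m)).mono interior_subset).congr_deriv (by ring)
  linarith [hmono hx hy hxy]

theorem Convex.mul_abs_sub_le_abs_image_sub_of_le_hasDerivWithinAt {s : Set ℝ}
    (hs : Convex ℝ s) {ψ ψ' : ℝ → ℝ} {m : ℝ} (hψ : ∀ x ∈ s, HasDerivWithinAt ψ (ψ' x) s x)
    (hm : ∀ x ∈ s, m ≤ ψ' x) {x y : ℝ} (hx : x ∈ s) (hy : y ∈ s) :
    m * |y - x| ≤ |ψ y - ψ x| := by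
  rcases le_total x y with hxy | hyx
  · rw [abs_of_nonneg (sub_nonneg.2 hxy)]
    exact (hs.mul_sub_le_image_sub_of_le_hasDerivWithinAt hψ hm hx hy hxy).trans (le_abs_self _)
  · rw [abs_sub_comm, abs_sub_comm (ψ y), abs_of_nonneg (sub_nonneg.2 hyx)]
    exact (hs.mul_sub_le_image_sub_of_le_hasDerivWithinAt hψ hm hy hx hyx).trans (le_abs_self _)

theorem sub_le_four_mul_of_sq_le {a b c : ℝ} (hab : a < b) (ha : a ^ 2 ≤ c * (b - a))
    (hb : b ^ 2 ≤ c * (b - a)) : b - a ≤ 4 * c := by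
  have hsq : (b - a) * (b - a) ≤ (4 * c) * (b - a) := by nlinarith [sq_nonneg (a + b)]
  exact le_of_mul_le_mul_right hsq (sub_pos.2 hab)

section

variable {K a b : ℝ} {f : ℝ → ℝ}

theorem KBoundedNonlinearity.sub_le_two_mul_sq (hK : 0 < K) (ha : a ≤ 0) (hb : 0 ≤ b)
    (hab : a < b) (hmaps : MapsTo f (Icc a b) (Icc a b)) (hnl : KBoundedNonlinearity K f a b) :
    b - a ≤ 2 * K ^ 2 := by
  obtain ⟨ψ, ψ', hψ0, hψ, hf⟩ := hnl
  have h0 : (0 : ℝ) ∈ Icc a b := ⟨ha, hb⟩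
  have hx_sq : ∀ x ∈ Icc a b, x ^ 2 ≤ K ^ 2 / 2 * (b - a) := fun x hx => by
    have hψ_lower : |x| ≤ K * |ψ x| := (inv_mul_le_iff₀ hK).1 <| by
      simpa [hψ0] using (convex_Icc a b).mul_abs_sub_le_abs_image_sub_of_le_hasDerivWithinAt
        (fun y hy => (hψ y hy).1) (fun y hy => (hψ y hy).2.1) h0 hx
    have hψ_sq : 2 * ψ x ^ 2 ≤ b - a := by linarith [hf x hx, (hmaps hx).2, (hmaps h0).1]
    calc x ^ 2 = |x| ^ 2 := (sq_abs x).symm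
      _ ≤ (K * |ψ x|) ^ 2 := pow_le_pow_left₀ (abs_nonneg x) hψ_lower 2
      _ = K ^ 2 * ψ x ^ 2 := by rw [mul_pow, sq_abs]
      _ ≤ K ^ 2 / 2 * (b - a) := by nlinarith [sq_nonneg K]
  linarith [sub_le_four_mul_of_sq_le hab (hx_sq a ⟨le_rfl, hab.le⟩) (hx_sq b ⟨hab.le, le_rfl⟩)]

theorem KBoundedNonlinearity.abs_le_of_hasDerivWithinAt (hK : 0 < K) (ha : a ≤ 0)
    (hb : 0 ≤ b) (hab : a < b) (hnl : KBoundedNonlinearity K f a b) {x d : ℝ}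
    (hx : x ∈ Icc a b) (hd : HasDerivWithinAt f d (Icc a b) x) :
    |d| ≤ 4 * K ^ 2 * (b - a) := by
  obtain ⟨ψ, ψ', hψ0, hψ, hf⟩ := hnl
  have hψ'_abs : ∀ y ∈ Icc a b, |ψ' y| ≤ K := fun y hy =>
    abs_le.2 ⟨by linarith [inv_pos.2 hK, (hψ y hy).2.1], (hψ y hy).2.2⟩
  have hψ_upper : |ψ x| ≤ K * (b - a) := by
    have hx_abs : |x| ≤ b - a := abs_le.2 ⟨by linarith [hx.1], by linarith [hx.2]⟩
    have := (convex_Icc a b).norm_image_sub_le_of_norm_hasDerivWithin_le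
      (fun y hy => (hψ y hy).1) hψ'_abs ⟨ha, hb⟩ hx
    rw [hψ0, sub_zero, sub_zero, Real.norm_eq_abs, Real.norm_eq_abs] at this
    exact this.trans (by gcongr)
  have hf' : HasDerivWithinAt f (4 * ψ x * ψ' x) (Icc a b) x :=
    ((((hψ x hx).1.pow 2).const_mul 2).const_add (f 0)).congr_of_mem
      (fun y hy => hf y hy) hx |>.congr_deriv (by ring)
  rw [(uniqueDiffOn_Icc hab x hx).eq_deriv _ hd hf', abs_mul, abs_mul, abs_of_pos four_pos]
  calc 4 * |ψ x| * |ψ' x| ≤ 4 * (K * (b - a)) * K := by gcongr; exact hψ'_abs x hx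
    _ = 4 * K ^ 2 * (b - a) := by ring

end

/-- Lemma 7.1 (1d upper bound): if `f : I → I` has `K`-bounded nonlinearity on a compact
interval `I ∋ 0`, then `|I| ≤ 2K²`, and consequently `|f'| ≤ 8K⁴` on `I`. -/
theorem stmt5 (K a b : ℝ) (f : ℝ → ℝ) (hK : 1 ≤ K)
    (ha : a ≤ 0) (hb : 0 ≤ b) (hab : a < b)
    (hmaps : MapsTo f (Icc a b) (Icc a b))
    (hnl : KBoundedNonlinearity K f a b) :
    b - a ≤ 2 * K ^ 2 ∧
      ∀ x ∈ Icc a b, ∀ d : ℝ, HasDerivWithinAt f d (Icc a b) x → |d| ≤ 8 * K ^ 4 := by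
  have hK0 : 0 < K := one_pos.trans_le hK
  have hlen := hnl.sub_le_two_mul_sq hK0 ha hb hab hmaps
  refine ⟨hlen, fun x hx d hd => ?_⟩
  calc |d| ≤ 4 * K ^ 2 * (b - a) := hnl.abs_le_of_hasDerivWithinAt hK0 ha hb hab hx hd
    _ ≤ 4 * K ^ 2 * (2 * K ^ 2) := by gcongr
    _ = 8 * K ^ 4 := by ring
end

section
/- For every K ≥ 1 and every integer n ≥ 1 there exists a constant ρₙ = ρₙ(K) > 0 with the following property. Let I ⊆ ℝ be a compact interval with 0 ∈ I and let f : I → ℝ be a map with f(I) ⊆ I that has K-bounded nonlinearity. If |fⁿ(0)| ≤ ρₙ (where fⁿ is the n-fold iterate), then the critical orbit converges to an n-periodic sink: there exist an interval J ⊆ I with 0 ∈ J, fⁿ(J) ⊆ J and |(fⁿ)'(x)| ≤ 1/2 for all x ∈ J, and a point p ∈ J with fⁿ(p) = p such that f^{kn}(0) → p as k → ∞. -/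
open Set Filter

/-!
Write `f = f 0 + 2 ψ²`, so `f' = 4 ψ ψ'` and `|f' x| ≤ 4 K² |x|`. Since `|ψ x| ≥ |x| / K`, an
interval mapped into itself has length at most `2 K²`, hence `|f'| ≤ M := 8 K⁴` on it. On
`J = I ∩ [-δ, δ]` the chain rule gives `|(fⁿ)'| ≤ 4 K² δ M ^ (n - 1) = 1 / 2` for a suitable `δ`,
so `fⁿ` is a `1/2`-contraction of `J`; when `|fⁿ 0| ≤ δ / 2` it maps `J` into itself, and the
Banach fixed point theorem produces the attracting periodic point.
-/

open Topology

lemma mul_abs_le_abs_of_le_hasDerivWithinAt {ψ ψ' : ℝ → ℝ} {a b c x : ℝ}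
    (h0 : (0 : ℝ) ∈ Icc a b) (hψ0 : ψ 0 = 0)
    (hψ : ∀ y ∈ Icc a b, HasDerivWithinAt ψ (ψ' y) (Icc a b) y) (hc : ∀ y ∈ Icc a b, c ≤ ψ' y)
    (hx : x ∈ Icc a b) : c * |x| ≤ |ψ x| := by
  have hderiv : ∀ y ∈ Icc a b,
      HasDerivWithinAt (fun y => ψ y - c * y) (ψ' y - c) (Icc a b) y := fun y hy => by
    simpa using (hψ y hy).fun_sub ((hasDerivWithinAt_id y _).const_mul c)
  have hmono : MonotoneOn (fun y => ψ y - c * y) (Icc a b) :=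
    monotoneOn_of_hasDerivWithinAt_nonneg (convex_Icc a b)
      (fun y hy => (hderiv y hy).continuousWithinAt)
      (fun y hy => (hderiv y (interior_subset hy)).mono interior_subset)
      (fun y hy => sub_nonneg.2 (hc y (interior_subset hy)))
  rcases le_total 0 x with hx0 | hx0
  · have := hmono h0 hx hx0
    simp only [hψ0, mul_zero, sub_zero] at this
    rw [abs_of_nonneg hx0]
    linarith [le_abs_self (ψ x)]
  · have := hmono hx h0 hx0
    simp only [hψ0, mul_zero, sub_zero] at this
    rw [abs_of_nonpos hx0]
    linarith [neg_abs_le (ψ x)]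

theorem hasDerivWithinAt_iterate_prod {𝕜 : Type*} [NontriviallyNormedField 𝕜] {f f' : 𝕜 → 𝕜}
    {s : Set 𝕜} (hs : MapsTo f s s) (hf : ∀ x ∈ s, HasDerivWithinAt f (f' x) s x) (n : ℕ)
    {x : 𝕜} (hx : x ∈ s) :
    HasDerivWithinAt f^[n] (∏ k ∈ Finset.range n, f' (f^[k] x)) s x := by
  induction n with
  | zero => simpa using hasDerivWithinAt_id x s
  | succ n ih =>
    rw [Function.iterate_succ', Finset.prod_range_succ, mul_comm]
    exact (hf _ (hs.iterate n hx)).comp x ih (hs.iterate n)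

lemma abs_prod_iterate_le {f f' : ℝ → ℝ} {s : Set ℝ} {M ε x : ℝ} (hs : MapsTo f s s)
    (hM : ∀ y ∈ s, |f' y| ≤ M) (hx : x ∈ s) (hε : |f' x| ≤ ε) (n : ℕ) :
    |∏ k ∈ Finset.range (n + 1), f' (f^[k] x)| ≤ ε * M ^ n := by
  rw [Finset.prod_range_succ', abs_mul, Finset.abs_prod, mul_comm, Function.iterate_zero_apply]
  have htail : ∏ k ∈ Finset.range n, |f' (f^[k + 1] x)| ≤ M ^ n := by
    simpa using Finset.prod_le_prod (s := Finset.range n) (fun _ _ => abs_nonneg _)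
      (fun k _ => hM _ (hs.iterate (k + 1) hx))
  exact mul_le_mul hε htail (Finset.prod_nonneg fun _ _ => abs_nonneg _)
    ((abs_nonneg _).trans hε)

lemma mapsTo_inter_Icc_of_lipschitzOnWith {g : ℝ → ℝ} {s : Set ℝ} {δ : ℝ} (hs : MapsTo g s s)
    (h0 : (0 : ℝ) ∈ s) (hg : LipschitzOnWith (1 / 2) g (s ∩ Icc (-δ) δ)) (hg0 : |g 0| ≤ δ / 2) :
    MapsTo g (s ∩ Icc (-δ) δ) (s ∩ Icc (-δ) δ) := by
  have hδ : 0 ≤ δ := by linarith [abs_nonneg (g 0)]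
  rintro x ⟨hxs, hxδ⟩
  have hdist := hg.dist_le_mul x ⟨hxs, hxδ⟩ 0 ⟨h0, by simpa using hδ⟩
  simp only [Real.dist_eq, sub_zero, NNReal.coe_div, NNReal.coe_one, NNReal.coe_ofNat] at hdist
  have hx : |x| ≤ δ := abs_le.2 hxδ
  have : |g x| ≤ δ := by linarith [abs_sub_abs_le_abs_sub (g x) (g 0)]
  exact ⟨hs hxs, abs_le.1 this⟩

lemma exists_fixedPoint_tendsto_iterate {α : Type*} [EMetricSpace α] {g : α → α} {s : Set α}
    {L : NNReal} (hL : L < 1) (hsc : IsComplete s) (hs : MapsTo g s s)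
    (hg : LipschitzOnWith L g s) {x : α} (hx : x ∈ s) (hx' : edist x (g x) ≠ ⊤) :
    ∃ p ∈ s, g p = p ∧ Tendsto (fun k => g^[k] x) atTop (𝓝 p) := by
  obtain ⟨p, hp, hgp, htend, -⟩ :=
    ContractingWith.exists_fixedPoint' hsc hs ⟨hL, hg.mapsToRestrict hs⟩ hx hx'
  exact ⟨p, hp, hgp, htend⟩

theorem exists_attracting_fixedPoint_of_abs_deriv_le_half {g g' : ℝ → ℝ} {a b δ : ℝ}
    (ha : a ≤ 0) (hb : 0 ≤ b) (hab : a < b) (hδ : 0 < δ) (hg : MapsTo g (Icc a b) (Icc a b))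
    (hg' : ∀ x ∈ Icc a b ∩ Icc (-δ) δ, HasDerivWithinAt g (g' x) (Icc a b) x ∧ |g' x| ≤ 1 / 2)
    (hg0 : |g 0| ≤ δ / 2) :
    ∃ c d : ℝ, a ≤ c ∧ c ≤ 0 ∧ 0 ≤ d ∧ d ≤ b ∧
      MapsTo g (Icc c d) (Icc c d) ∧
      (∀ x ∈ Icc c d, ∀ dv : ℝ, HasDerivWithinAt g dv (Icc c d) x → |dv| ≤ 1 / 2) ∧
      ∃ p ∈ Icc c d, g p = p ∧ Tendsto (fun k => g^[k] 0) atTop (𝓝 p) := by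
  have hJ : Icc a b ∩ Icc (-δ) δ = Icc (max a (-δ)) (min b δ) := Icc_inter_Icc
  set c := max a (-δ)
  set d := min b δ
  have hc : c ≤ 0 := max_le ha (by linarith)
  have hd : 0 ≤ d := le_min hb hδ.le
  have hcd : c < d := max_lt (lt_min hab (by linarith)) (lt_min (by linarith) (by linarith))
  have hderiv : ∀ x ∈ Icc c d, HasDerivWithinAt g (g' x) (Icc c d) x ∧ |g' x| ≤ 1 / 2 := by
    rw [← hJ]
    exact fun x hx => ⟨(hg' x hx).1.mono inter_subset_left, (hg' x hx).2⟩
  have hlip : LipschitzOnWith (1 / 2) g (Icc c d) :=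
    (convex_Icc c d).lipschitzOnWith_of_nnnorm_hasDerivWithin_le (fun x hx => (hderiv x hx).1)
      fun x hx => by
        rw [← NNReal.coe_le_coe, coe_nnnorm, Real.norm_eq_abs]
        simpa using (hderiv x hx).2
  have hmaps : MapsTo g (Icc c d) (Icc c d) := by
    rw [← hJ] at hlip ⊢
    exact mapsTo_inter_Icc_of_lipschitzOnWith hg ⟨ha, hb⟩ hlip hg0
  obtain ⟨p, hp, hgp, htend⟩ := exists_fixedPoint_tendsto_iterate (by norm_num)
    isClosed_Icc.isComplete hmaps hlip ⟨hc, hd⟩ (edist_ne_top _ _)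
  refine ⟨c, d, le_max_left _ _, hc, hd, min_le_left _ _, hmaps, fun x hx dv hdv => ?_,
    p, hp, hgp, htend⟩
  rw [← (uniqueDiffOn_Icc hcd x hx).eq_deriv _ (hderiv x hx).1 hdv]
  exact (hderiv x hx).2

namespace KBoundedNonlinearity

variable {K a b : ℝ} {f : ℝ → ℝ}

theorem exists_hasDerivWithinAt_abs_le (hf : KBoundedNonlinearity K f a b) (hK : 0 < K)
    (h0 : (0 : ℝ) ∈ Icc a b) :
    ∃ f' : ℝ → ℝ, ∀ x ∈ Icc a b,
      HasDerivWithinAt f (f' x) (Icc a b) x ∧ |f' x| ≤ 4 * K ^ 2 * |x| := by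
  obtain ⟨ψ, ψ', hψ0, hψ, hfψ⟩ := hf
  have hψ'K : ∀ x ∈ Icc a b, |ψ' x| ≤ K := fun x hx =>
    abs_le.2 ⟨by linarith [(hψ x hx).2.1, inv_pos.2 hK], (hψ x hx).2.2⟩
  refine ⟨fun x => 4 * ψ x * ψ' x, fun x hx => ⟨?_, ?_⟩⟩
  · have hsq := (((hψ x hx).1.pow 2).const_mul 2).const_add (f 0)
    refine (hsq.congr hfψ (hfψ x hx)).congr_deriv ?_
    push_cast
    ring
  · have hψx : |ψ x| ≤ K * |x| := by
      simpa [hψ0] using (convex_Icc a b).norm_image_sub_le_of_norm_hasDerivWithin_le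
        (fun y hy => (hψ y hy).1) hψ'K h0 hx
    rw [abs_mul, abs_mul, abs_of_pos (by norm_num : (0 : ℝ) < 4)]
    calc 4 * |ψ x| * |ψ' x| ≤ 4 * (K * |x|) * K := by gcongr; exact hψ'K x hx
      _ = 4 * K ^ 2 * |x| := by ring

theorem sub_le_two_mul_sq_s6 (hf : KBoundedNonlinearity K f a b) (hK : 0 < K)
    (h0 : (0 : ℝ) ∈ Icc a b) (hmaps : MapsTo f (Icc a b) (Icc a b)) : b - a ≤ 2 * K ^ 2 := by
  obtain ⟨ψ, ψ', hψ0, hψ, hfψ⟩ := hf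
  have hsq : ∀ x ∈ Icc a b, 2 * x ^ 2 ≤ K ^ 2 * (b - a) := fun x hx => by
    have hlow := mul_abs_le_abs_of_le_hasDerivWithinAt h0 hψ0 (fun y hy => (hψ y hy).1)
      (fun y hy => (hψ y hy).2.1) hx
    have hψsq : (K⁻¹ * |x|) ^ 2 ≤ ψ x ^ 2 := by
      simpa only [sq_abs] using pow_le_pow_left₀ (by positivity) hlow 2
    calc 2 * x ^ 2 = K ^ 2 * (2 * (K⁻¹ * |x|) ^ 2) := by field_simp; rw [sq_abs]
      _ ≤ K ^ 2 * (b - a) := by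
        gcongr
        linarith [hfψ x hx, (hmaps hx).2, (hmaps h0).1]
  have hab : a ≤ b := h0.1.trans h0.2
  have ha := hsq a (left_mem_Icc.2 hab)
  have hb := hsq b (right_mem_Icc.2 hab)
  by_contra! hlong
  have hpos : 0 < b - a := lt_of_le_of_lt (by positivity) hlong
  nlinarith [sq_nonneg (a + b), mul_lt_mul_of_pos_right hlong hpos]

end KBoundedNonlinearity

/-- Lemma 7.2 (1d lower bound): for every `K ≥ 1` and `n ≥ 1` there is ρₙ = ρₙ(K) > 0
such that if `f : I → I` has `K`-bounded nonlinearity on a compact interval `I ∋ 0` and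
`|fⁿ(0)| ≤ ρₙ`, then the critical orbit converges to an `n`-periodic sink: there is an
interval `J ⊆ I` with `0 ∈ J`, `fⁿ(J) ⊆ J` and `|(fⁿ)'| ≤ 1/2` on `J`, and a fixed point
`p ∈ J` of `fⁿ` with `f^{kn}(0) → p`. -/
theorem stmt6 (K : ℝ) (hK : 1 ≤ K) (n : ℕ) (hn : 1 ≤ n) :
    ∃ ρ : ℝ, 0 < ρ ∧
      ∀ (a b : ℝ) (f : ℝ → ℝ), a ≤ 0 → 0 ≤ b → a < b →
        MapsTo f (Icc a b) (Icc a b) →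
        KBoundedNonlinearity K f a b →
        |f^[n] 0| ≤ ρ →
        ∃ c d : ℝ, a ≤ c ∧ c ≤ 0 ∧ 0 ≤ d ∧ d ≤ b ∧
          MapsTo f^[n] (Icc c d) (Icc c d) ∧
          (∀ x ∈ Icc c d, ∀ dv : ℝ,
            HasDerivWithinAt f^[n] dv (Icc c d) x → |dv| ≤ 1 / 2) ∧
          ∃ p ∈ Icc c d, f^[n] p = p ∧
            Tendsto (fun k => f^[k * n] 0) atTop (nhds p) := by
  obtain ⟨m, rfl⟩ := Nat.exists_eq_add_of_le' hn
  have hK0 : 0 < K := by linarith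
  set M : ℝ := 8 * K ^ 4
  set δ : ℝ := 1 / (8 * K ^ 2 * M ^ m)
  have hδ : 0 < δ := by positivity
  refine ⟨δ / 2, by positivity, fun a b f ha hb hab hmaps hf hρ => ?_⟩
  obtain ⟨f', hf'⟩ := hf.exists_hasDerivWithinAt_abs_le hK0 ⟨ha, hb⟩
  have hlen := hf.sub_le_two_mul_sq_s6 hK0 ⟨ha, hb⟩ hmaps
  have hM : ∀ x ∈ Icc a b, |f' x| ≤ M := fun x hx => by
    have : |x| ≤ 2 * K ^ 2 := abs_le.2 ⟨by linarith [hx.1], by linarith [hx.2]⟩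
    calc |f' x| ≤ 4 * K ^ 2 * |x| := (hf' x hx).2
      _ ≤ 4 * K ^ 2 * (2 * K ^ 2) := by gcongr
      _ = M := by ring
  simp_rw [mul_comm _ (m + 1), Function.iterate_mul]
  refine exists_attracting_fixedPoint_of_abs_deriv_le_half ha hb hab hδ (hmaps.iterate _)
    (fun x ⟨hx, hxδ⟩ =>
      ⟨hasDerivWithinAt_iterate_prod hmaps (fun y hy => (hf' y hy).1) _ hx, ?_⟩) hρ
  calc _ ≤ 4 * K ^ 2 * δ * M ^ m :=
        abs_prod_iterate_le hmaps hM hx ((hf' x hx).2.trans (by gcongr; exact abs_le.2 hxδ)) m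
    _ = 1 / 2 := by simp only [δ, M]; field_simp; ring
end

section
/- Let f : I → I be a C² unimodal map with quadratic minimum at c. If f²(c) < c, then the even subsequence (f^{2k}(c))_{k≥0} is nonincreasing and converges to a point p ∈ [f(c), c] with f²(p) = p and 0 ≤ (f²)'(p) ≤ 1; consequently the forward orbit of c converges to a periodic orbit of f of period 1 or 2 which is attracting or parabolic. -/
/-!
On `J = [f c, c]` the map `f` is strictly decreasing and, once `f² c < c`, it maps `J` into
`[f c, f² c] ⊆ J`; hence `f²` is strictly increasing on `J` and the even orbit of `c` is a
nonincreasing sequence in `J` converging to a fixed point `p` of `f²`. The orbit stays strictly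
above `p`, and the slopes of `f²` between `p` and the orbit are the ratios
`(f^{2k+2} c - p) / (f^{2k} c - p) ∈ [0, 1]`, so their limit `(f²)'(p)` lies in `[0, 1]`.
-/

open Set Filter

/-- A `C²` unimodal map `f : [a,b] → [a,b]` with quadratic minimum at an interior point
`c`: `f` is `C²`, `c` is the unique critical point (`f'(c) = 0`, `f' ≠ 0` elsewhere),
`f''(c) > 0`, and `f` is strictly decreasing on `[a,c]` and strictly increasing on
`[c,b]`. -/
structure UnimodalMin (f : ℝ → ℝ) (a b c : ℝ) : Prop where
  hab : a < b
  hc : c ∈ Ioo a b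
  maps : MapsTo f (Icc a b) (Icc a b)
  smooth : ContDiffOn ℝ 2 f (Icc a b)
  crit : derivWithin f (Icc a b) c = 0
  noncrit : ∀ x ∈ Icc a b, x ≠ c → derivWithin f (Icc a b) x ≠ 0
  second : 0 < iteratedDerivWithin 2 f (Icc a b) c
  anti : StrictAntiOn f (Icc a c)
  mono : StrictMonoOn f (Icc c b)

open Function

section Orbit

variable {α : Type*} {g : α → α} {s : Set α} {x y : α}

theorem MonotoneOn.antitone_iterate_of_map_le [Preorder α] (hg : MonotoneOn g s)
    (hs : MapsTo g s s) (hx : x ∈ s) (hgx : g x ≤ x) : Antitone fun n => g^[n] x := by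
  refine antitone_nat_of_succ_le fun n => ?_
  induction n with
  | zero => exact hgx
  | succ n ih =>
    rw [iterate_succ_apply' g (n + 1)]
    exact (hg (hs.iterate (n + 1) hx) (hs.iterate n hx) ih).trans_eq
      (iterate_succ_apply' g n x).symm

theorem StrictMonoOn.lt_iterate_of_isFixedPt [Preorder α] (hg : StrictMonoOn g s)
    (hs : MapsTo g s s) (hy : y ∈ s) (hfix : IsFixedPt g y) (hx : x ∈ s) (hyx : y < x)
    (n : ℕ) : y < g^[n] x := by
  induction n with
  | zero => exact hyx
  | succ n ih =>
    rw [iterate_succ_apply', ← hfix.eq]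
    exact hg hy (hs.iterate n hx) ih

theorem isFixedPt_of_tendsto_iterate_of_continuousWithinAt [TopologicalSpace α] [T2Space α]
    (hy : Tendsto (fun n => g^[n] x) atTop (nhds y)) (hs : MapsTo g s s) (hx : x ∈ s)
    (hg : ContinuousWithinAt g s y) : IsFixedPt g y := by
  refine tendsto_nhds_unique ((tendsto_add_atTop_iff_nat 1).1 ?_) hy
  simp only [iterate_succ' g, comp_apply]
  exact hg.tendsto.comp <|
    tendsto_nhdsWithin_iff.2 ⟨hy, Eventually.of_forall fun n => hs.iterate n hx⟩

end Orbit

theorem HasDerivWithinAt.mem_Icc_of_tendsto_antitone_iterate {g : ℝ → ℝ} {s : Set ℝ}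
    {x p g' : ℝ} (hg : HasDerivWithinAt g g' s p) (hfix : IsFixedPt g p) (hs : MapsTo g s s)
    (hx : x ∈ s) (hanti : Antitone fun n => g^[n] x) (hgt : ∀ n, p < g^[n] x)
    (hlim : Tendsto (fun n => g^[n] x) atTop (nhds p)) : g' ∈ Icc 0 1 := by
  have hslope := (hasDerivWithinAt_iff_tendsto_slope.1 hg).comp <| tendsto_nhdsWithin_iff.2
    ⟨hlim, Eventually.of_forall fun n => ⟨hs.iterate n hx, (hgt n).ne'⟩⟩
  refine isClosed_Icc.mem_of_tendsto hslope (Eventually.of_forall fun n => ?_)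
  have hpos : 0 < g^[n] x - p := sub_pos.2 (hgt n)
  rw [comp_apply, slope_def_field, ← iterate_succ_apply' g, hfix.eq]
  exact ⟨div_nonneg (sub_pos.2 (hgt (n + 1))).le hpos.le,
    div_le_one_of_le₀ (by linarith [hanti n.le_succ]) hpos.le⟩

namespace UnimodalMin

variable {f : ℝ → ℝ} {a b c : ℝ}

theorem map_crit_lt_crit (h : UnimodalMin f a b c) (hfc : f (f c) < c) : f c < c := by
  by_contra! hcle
  have hcb : c ∈ Icc c b := ⟨le_rfl, h.hc.2.le⟩
  have hfcb : f c ∈ Icc c b := ⟨hcle, (h.maps ⟨h.hc.1.le, h.hc.2.le⟩).2⟩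
  exact hfc.not_ge (hcle.trans (h.mono.monotoneOn hcb hfcb hcle))

theorem Icc_map_crit_subset (h : UnimodalMin f a b c) : Icc (f c) c ⊆ Icc a c :=
  Icc_subset_Icc (h.maps ⟨h.hc.1.le, h.hc.2.le⟩).1 le_rfl

theorem mapsTo_Icc_map_crit (h : UnimodalMin f a b c) (hfc : f (f c) < c) :
    MapsTo f (Icc (f c) c) (Icc (f c) c) := by
  have hfc_lt := h.map_crit_lt_crit hfc
  have hc : c ∈ Icc a c := ⟨h.hc.1.le, le_rfl⟩
  intro x hx
  have hxac := h.Icc_map_crit_subset hx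
  exact ⟨h.anti.antitoneOn hxac hc hx.2,
    (h.anti.antitoneOn (h.Icc_map_crit_subset ⟨le_rfl, hfc_lt.le⟩) hxac hx.1).trans hfc.le⟩

theorem strictMonoOn_comp_self_Icc_map_crit (h : UnimodalMin f a b c) (hfc : f (f c) < c) :
    StrictMonoOn (f ∘ f) (Icc (f c) c) :=
  have hanti := h.anti.mono h.Icc_map_crit_subset
  hanti.comp hanti (h.mapsTo_Icc_map_crit hfc)

end UnimodalMin

/-- Lemma 6.1 ii) (sink combin): if `f²(c) < c`, then the even orbit
`(f^{2k}(c))_{k ≥ 0}` is nonincreasing and converges to a point `p ∈ [f(c), c]` with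
`f²(p) = p` and `0 ≤ (f²)'(p) ≤ 1`; consequently the orbit of `c` converges to an
attracting or parabolic periodic orbit of period `1` or `2`. -/
theorem stmt8 (f : ℝ → ℝ) (a b c : ℝ) (h : UnimodalMin f a b c) (hfc : f^[2] c < c) :
    ∃ p ∈ Icc (f c) c,
      (∀ k : ℕ, f^[2 * (k + 1)] c ≤ f^[2 * k] c) ∧
      Tendsto (fun k => f^[2 * k] c) atTop (nhds p) ∧
      f (f p) = p ∧
      0 ≤ derivWithin (f ∘ f) (Icc a b) p ∧ derivWithin (f ∘ f) (Icc a b) p ≤ 1 ∧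
      Tendsto (fun k => f^[2 * k + 1] c) atTop (nhds (f p)) := by
  have horbit : ∀ k, f^[2 * k] c = (f ∘ f)^[k] c := fun k => by rw [iterate_mul]; rfl
  simp only [horbit]
  replace hfc : f (f c) < c := hfc
  have hJ := h.mapsTo_Icc_map_crit hfc
  have hJJ : MapsTo (f ∘ f) (Icc (f c) c) (Icc (f c) c) := hJ.comp hJ
  have hcJ : c ∈ Icc (f c) c := ⟨(h.map_crit_lt_crit hfc).le, le_rfl⟩
  have hJab : Icc (f c) c ⊆ Icc a b :=
    h.Icc_map_crit_subset.trans (Icc_subset_Icc_right h.hc.2.le)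
  have hmono := h.strictMonoOn_comp_self_Icc_map_crit hfc
  have hanti := hmono.monotoneOn.antitone_iterate_of_map_le hJJ hcJ hfc.le
  have horbitJ : ∀ n, (f ∘ f)^[n] c ∈ Icc (f c) c := fun n => hJJ.iterate n hcJ
  obtain ⟨p, hpJ, hlim⟩ :
      ∃ p ∈ Icc (f c) c, Tendsto (fun n => (f ∘ f)^[n] c) atTop (nhds p) :=
    have hlim := tendsto_atTop_ciInf hanti ⟨f c, forall_mem_range.2 fun n => (horbitJ n).1⟩
    ⟨_, isClosed_Icc.mem_of_tendsto hlim (Eventually.of_forall horbitJ), hlim⟩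
  have hcont : ContinuousOn f (Icc a b) := h.smooth.continuousOn
  have hfix : IsFixedPt (f ∘ f) p := isFixedPt_of_tendsto_iterate_of_continuousWithinAt hlim hJJ
    hcJ ((hcont.comp hcont h.maps).mono hJab p hpJ)
  have hgt := hmono.lt_iterate_of_isFixedPt hJJ hpJ hfix hcJ
    ((hanti.le_of_tendsto hlim 1).trans_lt hfc)
  have hdiff : DifferentiableOn ℝ f (Icc a b) := h.smooth.differentiableOn two_ne_zero
  have hderiv := ((hdiff _ (h.maps (hJab hpJ))).comp p (hdiff p (hJab hpJ)) h.maps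
    ).hasDerivWithinAt.mem_Icc_of_tendsto_antitone_iterate hfix (h.maps.comp h.maps) (hJab hcJ)
    hanti hgt hlim
  refine ⟨p, hpJ, fun k => hanti k.le_succ, hlim, hfix, hderiv.1, hderiv.2, ?_⟩
  simp only [iterate_succ_apply', horbit]
  exact (hcont p (hJab hpJ)).tendsto.comp <|
    tendsto_nhdsWithin_iff.2 ⟨hlim, Eventually.of_forall fun n => hJab (horbitJ n)⟩
end

section
/- Let I ⊆ ℝ be a compact interval with 0 ∈ I, let D = I × I ⊆ ℝ², and let F : D → D be a map of the form F(x,y) = (f(x,y), x) with f : D → I. Define g : I → I by g(x) := f(x,0), let L ≥ 0 be a Lipschitz constant for g on I, and suppose |f(x,y) − f(x,0)| ≤ β for all (x,y) ∈ D and some β ≥ 0. Then for every integer k ≥ 1 and every x ∈ I, writing π_h for the first-coordinate projection, |π_h(F^k(x,0)) − g^k(x)| ≤ β · Σ_{j=0}^{k−2} L^j (so in particular ≤ β·(1+L)^k), where F^k and g^k denote k-fold iterates. -/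
open Set

lemma geom_sum_le_aux (L : ℝ) (hL : 0 ≤ L) :
    ∀ n : ℕ, ∑ j ∈ Finset.range n, L ^ j ≤ (1 + L) ^ n - L ^ n := by
  intro n
  induction n with
  | zero => simp
  | succ m ih =>
      rw [Finset.sum_range_succ, pow_succ, pow_succ]
      have hp : L ^ m ≤ (1 + L) ^ m := pow_le_pow_left₀ hL (by linarith) m
      nlinarith

lemma geom_sum_le_one_add_pow (L : ℝ) (hL : 0 ≤ L) :
    ∀ n : ℕ, ∑ j ∈ Finset.range n, L ^ j ≤ (1 + L) ^ n := by
  intro n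
  have := geom_sum_le_aux L hL n
  have h2 : (0:ℝ) ≤ L ^ n := by positivity
  linarith

/-- Core of Proposition 7.2 (2d close 1d): for a Hénon-like map
`F(x,y) = (f(x,y), x)` on `D = I × I` whose 1D profile `g(x) = f(x,0)` is `L`-Lipschitz
on `I`, and which is `β`-thin (`|f(x,y) − f(x,0)| ≤ β`), the horizontal coordinate of the
orbit of `(x,0)` is shadowed by the orbit of `g`:
`|π_h(F^k(x,0)) − g^k(x)| ≤ β·Σ_{j=0}^{k−2} L^j ≤ β·(1+L)^k`. -/
theorem stmt13 (a b : ℝ) (hab : a ≤ b) (h0 : (0 : ℝ) ∈ Icc a b)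
    (f : ℝ → ℝ → ℝ) (L β : ℝ) (hL : 0 ≤ L) (hβ : 0 ≤ β)
    (hf : ∀ x ∈ Icc a b, ∀ y ∈ Icc a b, f x y ∈ Icc a b)
    (hLip : ∀ x ∈ Icc a b, ∀ x' ∈ Icc a b, |f x 0 - f x' 0| ≤ L * |x - x'|)
    (hthin : ∀ x ∈ Icc a b, ∀ y ∈ Icc a b, |f x y - f x 0| ≤ β) :
    ∀ k : ℕ, 1 ≤ k → ∀ x ∈ Icc a b,
      |((fun p : ℝ × ℝ => (f p.1 p.2, p.1))^[k] (x, 0)).1 - (fun z => f z 0)^[k] x| ≤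
          β * ∑ j ∈ Finset.range (k - 1), L ^ j ∧
      |((fun p : ℝ × ℝ => (f p.1 p.2, p.1))^[k] (x, 0)).1 - (fun z => f z 0)^[k] x| ≤
          β * (1 + L) ^ k := by
  intro k hk x hx
  set F := fun p : ℝ × ℝ => (f p.1 p.2, p.1) with hF
  set g := fun z : ℝ => f z 0 with hg
  have key : ∀ k : ℕ, 1 ≤ k →
      (F^[k] (x,0)).1 ∈ Icc a b ∧ (F^[k] (x,0)).2 ∈ Icc a b ∧ g^[k] x ∈ Icc a b ∧
      |(F^[k] (x,0)).1 - g^[k] x| ≤ β * ∑ j ∈ Finset.range (k-1), L ^ j := by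
    intro k hk
    induction k, hk using Nat.le_induction with
    | base =>
      simp only [Function.iterate_one]
      refine ⟨hf x hx 0 h0, hx, hf x hx 0 h0, ?_⟩
      simp [F, g]
    | succ n hn ih =>
      obtain ⟨h1, h2, h3, h4⟩ := ih
      rw [Function.iterate_succ_apply', Function.iterate_succ_apply']
      refine ⟨hf _ h1 _ h2, h1, hf _ h3 0 h0, ?_⟩
      have step : |f (F^[n] (x,0)).1 (F^[n] (x,0)).2 - f (g^[n] x) 0| ≤
          β + L * |(F^[n] (x,0)).1 - g^[n] x| := by
        calc |f (F^[n] (x,0)).1 (F^[n] (x,0)).2 - f (g^[n] x) 0|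
            ≤ |f (F^[n] (x,0)).1 (F^[n] (x,0)).2 - f (F^[n] (x,0)).1 0| +
              |f (F^[n] (x,0)).1 0 - f (g^[n] x) 0| := abs_sub_le _ _ _
          _ ≤ β + L * |(F^[n] (x,0)).1 - g^[n] x| :=
              add_le_add (hthin _ h1 _ h2) (hLip _ h1 _ h3)
      have hsum : ∑ j ∈ Finset.range (n + 1 - 1), L ^ j
          = 1 + L * ∑ j ∈ Finset.range (n - 1), L ^ j := by
        obtain ⟨m, rfl⟩ := Nat.exists_eq_succ_of_ne_zero (by omega : n ≠ 0)
        simp only [Nat.add_sub_cancel, Nat.succ_sub_one]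
        rw [Finset.sum_range_succ', Finset.mul_sum, pow_zero]
        have hcongr : ∀ i ∈ Finset.range m, L ^ (i + 1) = L * L ^ i := fun i _ => by ring
        rw [Finset.sum_congr rfl hcongr]
        ring
      have habs : (F (F^[n] (x,0))).1 = f (F^[n] (x,0)).1 (F^[n] (x,0)).2 := rfl
      have habs' : g (g^[n] x) = f (g^[n] x) 0 := rfl
      rw [habs, habs', hsum]
      have hLmul : L * |(F^[n] (x,0)).1 - g^[n] x|
          ≤ L * (β * ∑ j ∈ Finset.range (n-1), L ^ j) := by
        exact mul_le_mul_of_nonneg_left h4 hL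
      calc |f (F^[n] (x,0)).1 (F^[n] (x,0)).2 - f (g^[n] x) 0|
          ≤ β + L * (β * ∑ j ∈ Finset.range (n-1), L ^ j) := by linarith
        _ = β * (1 + L * ∑ j ∈ Finset.range (n-1), L ^ j) := by ring
  obtain ⟨-, -, -, hmain⟩ := key k hk
  refine ⟨hmain, hmain.trans ?_⟩
  have h1 : ∑ j ∈ Finset.range (k-1), L ^ j ≤ ∑ j ∈ Finset.range k, L ^ j := by
    apply Finset.sum_le_sum_of_subset_of_nonneg
    · exact Finset.range_subset_range.mpr (Nat.sub_le k 1)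
    · intro i _ _; positivity
  have h2 := geom_sum_le_one_add_pow L hL k
  exact mul_le_mul_of_nonneg_left (h1.trans h2) hβ
end
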